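/- Let A be a countable group equipped with a proper left-invariant metric d. Then for any subgroups B and C of A, any element g ∈ A, and any constant K ≥ 0, there exists a constant M ≥ 0 (depending on B, C, g and K) such that B ∩ N_K(gC) ⊆ N_M(B ∩ gCg⁻¹), where N_K(X) denotes the closed K-neighborhood of the set X with respect to d. -/

import Mathlib

/-!
For `b ∈ B` with `dist b (g * c) ≤ K`, the displacement `b⁻¹ * (g * c)` lies in the finite ball of
radius `K` about `1`. Fix once and for all, for each displacement `t` of this form, one pair
`b₁ ∈ B`, `c₁ ∈ C` realising it. Two pairs with the same displacement differ by an element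
`b * b₁⁻¹ = g * (c * c₁⁻¹) * g⁻¹` of `B ∩ gCg⁻¹`, at distance `dist 1 b₁⁻¹` from `b`; finitely many
choices of `b₁` bound this distance uniformly.
-/

theorem Set.Finite.exists_bounded_witnesses {α β : Type*} {S : Set α} (hS : S.Finite)
    (R : α → β → Prop) (f : β → ℝ) :
    ∃ M : ℝ, 0 ≤ M ∧ ∀ s ∈ S, (∃ y, R s y) → ∃ y, R s y ∧ f y ≤ M := by
  have hS' : {s | s ∈ S ∧ ∃ y, R s y}.Finite := hS.subset fun s hs => hs.1
  choose y hy using fun s (hs : s ∈ {s | s ∈ S ∧ ∃ y, R s y}) => hs.2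
  obtain ⟨M, hM⟩ := (hS'.dependent_image fun s hs => f (y s hs)).bddAbove
  refine ⟨max M 0, le_max_right _ _, fun s hs hR => ⟨y s ⟨hs, hR⟩, hy s ⟨hs, hR⟩, ?_⟩⟩
  exact (hM ⟨s, ⟨hs, hR⟩, rfl⟩).trans (le_max_left _ _)

theorem dist_mul_right_eq_dist_one {A : Type*} [MulOneClass A] [PseudoMetricSpace A]
    (hleft : ∀ a x y : A, dist (a * x) (a * y) = dist x y) (a x : A) :
    dist a (a * x) = dist 1 x := by
  simpa only [mul_one] using hleft a 1 x

theorem mul_inv_eq_conj_of_inv_mul_eq {A : Type*} [Group A] {b b₁ g c c₁ : A}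
    (h : b₁⁻¹ * (g * c₁) = b⁻¹ * (g * c)) : b * b₁⁻¹ = g * (c * c₁⁻¹) * g⁻¹ := by
  have hb₁ : b₁⁻¹ = b⁻¹ * (g * c) * (g * c₁)⁻¹ := eq_mul_inv_of_mul_eq h
  rw [hb₁]
  group

theorem stmt0_general {A : Type*} [Group A] [MetricSpace A]
    (hleft : ∀ a x y : A, dist (a * x) (a * y) = dist x y)
    (hproper : ∀ r : ℝ, {a : A | dist 1 a ≤ r}.Finite)
    (B C : Subgroup A) (g : A) (K : ℝ) :
    ∃ M : ℝ, 0 ≤ M ∧ ∀ b ∈ B, (∃ c ∈ C, dist b (g * c) ≤ K) →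
      ∃ x, x ∈ B ∧ (∃ c ∈ C, x = g * c * g⁻¹) ∧ dist b x ≤ M := by
  obtain ⟨M, hM₀, hM⟩ := (hproper K).exists_bounded_witnesses
    (fun t b₁ => b₁ ∈ B ∧ ∃ c₁ ∈ C, b₁⁻¹ * (g * c₁) = t) (fun b₁ => dist 1 b₁⁻¹)
  refine ⟨M, hM₀, ?_⟩
  rintro b hb ⟨c, hc, hbc⟩
  have hdisp : dist 1 (b⁻¹ * (g * c)) ≤ K := by
    rwa [← dist_mul_right_eq_dist_one hleft, mul_inv_cancel_left]
  obtain ⟨b₁, ⟨hb₁, c₁, hc₁, heq⟩, hle⟩ := hM _ hdisp ⟨b, hb, c, hc, rfl⟩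
  refine ⟨b * b₁⁻¹, B.mul_mem hb (B.inv_mem hb₁),
    ⟨c * c₁⁻¹, C.mul_mem hc (C.inv_mem hc₁), mul_inv_eq_conj_of_inv_mul_eq heq⟩, ?_⟩
  rwa [dist_mul_right_eq_dist_one hleft]

/-- Let `A` be a countable group with a proper left-invariant metric `d`.
For any subgroups `B, C ≤ A`, any `g ∈ A` and any `K ≥ 0`, there is `M ≥ 0` with
`B ∩ N_K(gC) ⊆ N_M(B ∩ gCg⁻¹)`. -/
theorem stmt0 {A : Type*} [Group A] [Countable A] [MetricSpace A]
    (hleft : ∀ a x y : A, dist (a * x) (a * y) = dist x y)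
    (hproper : ∀ r : ℝ, {a : A | dist 1 a ≤ r}.Finite)
    (B C : Subgroup A) (g : A) (K : ℝ) (hK : 0 ≤ K) :
    ∃ M : ℝ, 0 ≤ M ∧ ∀ b ∈ B, (∃ c ∈ C, dist b (g * c) ≤ K) →
      ∃ x, x ∈ B ∧ (∃ c ∈ C, x = g * c * g⁻¹) ∧ dist b x ≤ M :=
  stmt0_general hleft hproper B C g K
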